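/- arXiv:0809.3425 — 2 statements merged into one kernel-verified Lean document; each statement's English description precedes it below -/
import Mathlib

section
/- Let G = (V,E) be a locally finite directed graph and let ā, b̄ be finite tuples from V of equal length with ā ≡² b̄. Then for every n there is a bijection between the n-neighbourhoods B_n(ā) and B_n(b̄) which sends ā to b̄ (componentwise) and preserves the relation E in both directions. -/
namespace AutoStruct

/-! ### Regular languages, convolutions, regular relations -/

/-- A language is regular if it is accepted by a DFA with finitely many states. -/
def IsRegularLang {α : Type} (L : Set (List α)) : Prop :=
  ∃ (σ : Type) (_ : Fintype σ) (M : DFA α σ), M.accepts = L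

/-- Convolution of a pair of words, using `none` as the padding symbol `◇`. -/
def conv2 {α : Type} (u v : List α) : List (Option α × Option α) :=
  (List.range (max u.length v.length)).map fun k => (u[k]?, v[k]?)

/-- Convolution of an `n`-tuple of words, using `none` as the padding symbol `◇`. -/
def conv {α : Type} {n : ℕ} (w : Fin n → List α) : List (Fin n → Option α) :=
  (List.range (Finset.univ.sup fun i => (w i).length)).map fun k i => (w i)[k]?

/-- A binary relation on words is regular if the language of convolutions of its pairs
is regular. -/
def IsRegularRel2 {α : Type} (r : List α → List α → Prop) : Prop :=
  IsRegularLang {w | ∃ u v, r u v ∧ w = conv2 u v}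

/-- An `n`-ary relation on words is regular if the language of convolutions of its tuples
is regular. -/
def IsRegularRel {α : Type} {n : ℕ} (R : (Fin n → List α) → Prop) : Prop :=
  IsRegularLang {w | ∃ t, R t ∧ w = conv t}

/-! ### Ordinal heights of well-founded relations -/

/-- The rank `r_A(x) = sup { r_A(y) + 1 : (y,x) ∈ R }` of an element of a well-founded
relation. -/
noncomputable def wfRank {β : Type} {r : β → β → Prop} (h : WellFounded r) (x : β) :
    Ordinal :=
  (h.apply x).rank

/-- The ordinal height `r(A) = sup { r_A(x) : x ∈ A }` of a well-founded relation. -/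
noncomputable def relHeight {β : Type} {r : β → β → Prop} (h : WellFounded r) : Ordinal :=
  ⨆ x, wfRank h x

/-! ### Computable ordinals -/

/-- An ordinal is computable if it is the order type of a computable (decidable) well-ordering
of (a decidable set of) natural numbers. -/
def IsComputableOrdinal (α : Ordinal) : Prop :=
  ∃ (A : Set ℕ) (r : ℕ → ℕ → Prop) (_ : ComputablePred fun n => n ∈ A)
    (_ : ComputablePred fun p : ℕ × ℕ => r p.1 p.2)
    (hwo : IsWellOrder {n // n ∈ A} fun x y => r x.1 y.1),
    @Ordinal.type _ _ hwo = α

/-- `ω₁^CK`, the least non-computable ordinal. -/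
noncomputable def omega1CK : Ordinal :=
  sInf {α | ¬ IsComputableOrdinal α}

/-! ### Scott rank machinery for relational structures -/

section ScottRank

variable {D : Type}

/-- Atomic (quantifier-free) equivalence of two tuples in a relational structure with
relations `rel i` of arity `ar i`: the tuples satisfy the same quantifier-free formulas. -/
def atomEquiv {ν : ℕ} {ar : Fin ν → ℕ} (rel : (i : Fin ν) → (Fin (ar i) → D) → Prop)
    {k : ℕ} (a b : Fin k → D) : Prop :=
  (∀ i j, a i = a j ↔ b i = b j) ∧
  ∀ (i : Fin ν) (f : Fin (ar i) → Fin k), rel i (a ∘ f) ↔ rel i (b ∘ f)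

/-- The back-and-forth equivalence relations `ā ≡^α b̄` on tuples of a relational
structure. -/
noncomputable def bfEquiv {ν : ℕ} {ar : Fin ν → ℕ}
    (rel : (i : Fin ν) → (Fin (ar i) → D) → Prop)
    (α : Ordinal) (k : ℕ) (a b : Fin k → D) : Prop :=
  if α = 0 then atomEquiv rel a b
  else ∀ β < α,
    (∀ (l : ℕ) (c : Fin l → D), ∃ d : Fin l → D,
      bfEquiv rel β (k + l) (Fin.append a c) (Fin.append b d)) ∧
    (∀ (l : ℕ) (d : Fin l → D), ∃ c : Fin l → D,
      bfEquiv rel β (k + l) (Fin.append a c) (Fin.append b d))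
termination_by α
decreasing_by all_goals assumption

/-- An automorphism of a relational structure. -/
def IsAutomorphism {ν : ℕ} {ar : Fin ν → ℕ} (rel : (i : Fin ν) → (Fin (ar i) → D) → Prop)
    (g : D ≃ D) : Prop :=
  ∀ (i : Fin ν) (t : Fin (ar i) → D), rel i t ↔ rel i fun j => g (t j)

/-- The Scott rank of a tuple: the least `β` such that `≡^β`-equivalence to the tuple implies
being in the same automorphism orbit. -/
noncomputable def tupleSR {ν : ℕ} {ar : Fin ν → ℕ}
    (rel : (i : Fin ν) → (Fin (ar i) → D) → Prop) {k : ℕ} (a : Fin k → D) : Ordinal :=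
  sInf {β | ∀ b : Fin k → D, bfEquiv rel β k a b →
    ∃ g : D ≃ D, IsAutomorphism rel g ∧ ∀ i, g (a i) = b i}

/-- The Scott rank of a relational structure: the least ordinal greater than the Scott ranks
of all finite tuples. -/
noncomputable def scottRank {ν : ℕ} {ar : Fin ν → ℕ}
    (rel : (i : Fin ν) → (Fin (ar i) → D) → Prop) : Ordinal :=
  sInf {γ | ∀ (k : ℕ) (a : Fin k → D), tupleSR rel a < γ}

end ScottRank

/-! ### Word structures: automatic and computable structures -/

/-- A structure `(A; R₁, …, R_ν)` whose domain is a set of words over the alphabet `α`,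
with `ν` relations, the `i`-th of arity `ar i`. -/
structure WordStructure (α : Type) (ν : ℕ) (ar : Fin ν → ℕ) where
  dom : Set (List α)
  rel : (i : Fin ν) → (Fin (ar i) → List α) → Prop
  rel_dom : ∀ i t, rel i t → ∀ j, t j ∈ dom

/-- The relations of a word structure, restricted to (the subtype of) its domain. -/
def WordStructure.relOn {α : Type} {ν : ℕ} {ar : Fin ν → ℕ} (S : WordStructure α ν ar) :
    (i : Fin ν) → (Fin (ar i) → ↥S.dom) → Prop :=
  fun i t => S.rel i fun j => ↑(t j)

/-- A word structure is automatic if its domain is a regular language and all its relations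
are regular. -/
def WordStructure.IsAutomatic {α : Type} {ν : ℕ} {ar : Fin ν → ℕ}
    (S : WordStructure α ν ar) : Prop :=
  IsRegularLang S.dom ∧ ∀ i, IsRegularRel (S.rel i)

/-- A word structure is computable if its domain and all its relations are computable. -/
def WordStructure.IsComputableStr {α : Type} [Primcodable α] {ν : ℕ} {ar : Fin ν → ℕ}
    (S : WordStructure α ν ar) : Prop :=
  ComputablePred (fun w : List α => w ∈ S.dom) ∧
    ∀ i, ComputablePred fun t : Fin (ar i) → List α => S.rel i t

/-- The Scott rank of a word structure. -/
noncomputable def WordStructure.SR {α : Type} {ν : ℕ} {ar : Fin ν → ℕ}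
    (S : WordStructure α ν ar) : Ordinal :=
  scottRank S.relOn

/-! ### Abstract relational structures, isomorphism, ω-fold disjoint union -/

/-- An abstract relational structure with `ν` relations of arities `ar`. -/
structure RelStruct (ν : ℕ) (ar : Fin ν → ℕ) where
  carrier : Type
  rel : (i : Fin ν) → (Fin (ar i) → carrier) → Prop

/-- The abstract relational structure underlying a word structure. -/
def WordStructure.toRelStruct {α : Type} {ν : ℕ} {ar : Fin ν → ℕ}
    (S : WordStructure α ν ar) : RelStruct ν ar :=
  ⟨↥S.dom, S.relOn⟩

/-- Isomorphism of abstract relational structures. -/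
def RelStruct.Iso {ν : ℕ} {ar : Fin ν → ℕ} (S T : RelStruct ν ar) : Prop :=
  ∃ g : S.carrier ≃ T.carrier, ∀ i t, S.rel i t ↔ T.rel i fun j => g (t j)

/-- The ω-fold disjoint union of an abstract relational structure: countably many disjoint
copies, a relation holding of a tuple iff all components lie in the same copy and the
corresponding tuple satisfies the relation in the original structure. -/
def omegaFold {ν : ℕ} {ar : Fin ν → ℕ} (S : RelStruct ν ar) : RelStruct ν ar :=
  ⟨S.carrier × ℕ, fun i t => (∀ j j', (t j).2 = (t j').2) ∧ S.rel i fun j => (t j).1⟩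

/-! ### Trees and Cantor–Bendixson rank -/

/-- `(T, le)` is a partial order tree: `le` is a partial order with a least element in which
every set `{x : x ≤ y}` is finite and linearly ordered. -/
def IsPOTree {T : Type} (le : T → T → Prop) : Prop :=
  (∀ x, le x x) ∧ (∀ x y z, le x y → le y z → le x z) ∧
  (∀ x y, le x y → le y x → x = y) ∧
  (∃ r, ∀ x, le r x) ∧
  (∀ y, {x | le x y}.Finite ∧ ∀ x z, le x y → le z y → le x z ∨ le z x)

/-- `(T, S)` is a successor tree: the reflexive–transitive closure of `S` is a partial order
tree. -/
def IsSuccTree {T : Type} (S : T → T → Prop) : Prop :=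
  IsPOTree (Relation.ReflTransGen S)

/-- The derivative of (a subset of) a successor tree: the set of nodes lying on at least two
distinct infinite paths within the subset. -/
def treeDeriv {T : Type} (S : T → T → Prop) (X : Set T) : Set T :=
  {x ∈ X | ∃ p q : ℕ → T, p 0 = x ∧ q 0 = x ∧ (∀ n, p n ∈ X) ∧ (∀ n, q n ∈ X) ∧
    (∀ n, S (p n) (p (n + 1))) ∧ (∀ n, S (q n) (q (n + 1))) ∧ p ≠ q}

/-- The transfinite iteration of the tree derivative, starting from the whole tree. -/
noncomputable def treeDerivIter {T : Type} (S : T → T → Prop) (α : Ordinal) : Set T :=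
  Ordinal.limitRecOn α Set.univ (fun _ X => treeDeriv S X)
    (fun o _ ih => ⋂ (β : Ordinal) (h : β < o), ih β h)

/-- The Cantor–Bendixson rank of a successor tree: the least `α` such that the `α`-th
derivative equals the `α+1`-st derivative. -/
noncomputable def CBrank {T : Type} (S : T → T → Prop) : Ordinal :=
  sInf {α | treeDerivIter S (α + 1) = treeDerivIter S α}

/-- The derivative of (a subset of) a partial order tree: the set of nodes lying on at least
two distinct infinite paths (i.e. admitting two eventually incomparable infinite strictly
increasing chains) within the subset. -/
def poDeriv {T : Type} (le : T → T → Prop) (X : Set T) : Set T :=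
  {x ∈ X | ∃ p q : ℕ → T, p 0 = x ∧ q 0 = x ∧ (∀ n, p n ∈ X) ∧ (∀ n, q n ∈ X) ∧
    (∀ n, le (p n) (p (n + 1)) ∧ p n ≠ p (n + 1)) ∧
    (∀ n, le (q n) (q (n + 1)) ∧ q n ≠ q (n + 1)) ∧
    ∃ n m, ¬ le (p n) (q m) ∧ ¬ le (q m) (p n)}

noncomputable def poDerivIter {T : Type} (le : T → T → Prop) (α : Ordinal) : Set T :=
  Ordinal.limitRecOn α Set.univ (fun _ X => poDeriv le X)
    (fun o _ ih => ⋂ (β : Ordinal) (h : β < o), ih β h)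

/-- The Cantor–Bendixson rank of a partial order tree. -/
noncomputable def CBrankPO {T : Type} (le : T → T → Prop) : Ordinal :=
  sInf {α | poDerivIter le (α + 1) = poDerivIter le α}

/-- The product of two successor trees, where `r₂` is the root of the second tree. -/
def prodSucc {T₁ T₂ : Type} (S₁ : T₁ → T₁ → Prop) (S₂ : T₂ → T₂ → Prop) (r₂ : T₂) :
    T₁ × T₂ → T₁ × T₂ → Prop :=
  fun p q =>
    (p.2 = r₂ ∧ ((q.1 = p.1 ∧ S₂ p.2 q.2) ∨ (S₁ p.1 q.1 ∧ p.2 = q.2))) ∨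
    (p.2 ≠ r₂ ∧ q.1 = p.1 ∧ S₂ p.2 q.2)

/-! ### Locally finite graphs -/

/-- A directed graph is locally finite if every vertex has finitely many neighbours
(in either direction). -/
def LocallyFiniteGraph {V : Type} (E : V → V → Prop) : Prop :=
  ∀ x, {y | E x y ∨ E y x}.Finite

/-- A graph as a relational structure with one binary relation. -/
def graphRel {V : Type} (E : V → V → Prop) : (i : Fin 1) → (Fin 2 → V) → Prop :=
  fun _ t => E (t 0) (t 1)

/-- `ball E U n` is the `n`-neighbourhood of `U`: vertices reachable from `U` by `n` or fewer
edges (traversed in either direction). -/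
def ball {V : Type} (E : V → V → Prop) (U : Set V) : ℕ → Set V
  | 0 => U
  | n + 1 => ball E U n ∪ {v | ∃ u ∈ ball E U n, E u v ∨ E v u}

/-- Connectivity with respect to the symmetrization of `E`. -/
def conn {V : Type} (E : V → V → Prop) : V → V → Prop :=
  Relation.ReflTransGen fun u v => E u v ∨ E v u

section BackAndForth

variable {D : Type} {ν : ℕ} {ar : Fin ν → ℕ} {rel : (i : Fin ν) → (Fin (ar i) → D) → Prop}
  {k : ℕ} {a b : Fin k → D}

theorem bfEquiv_zero_iff : bfEquiv rel 0 k a b ↔ atomEquiv rel a b := by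
  rw [bfEquiv, if_pos rfl]

theorem bfEquiv.exists_forth {α β : Ordinal} (h : bfEquiv rel α k a b) (hβ : β < α)
    {l : ℕ} (c : Fin l → D) :
    ∃ d : Fin l → D, bfEquiv rel β (k + l) (Fin.append a c) (Fin.append b d) := by
  rw [bfEquiv, if_neg (zero_le.trans_lt hβ).ne'] at h
  exact (h β hβ).1 l c

theorem bfEquiv.exists_back {α β : Ordinal} (h : bfEquiv rel α k a b) (hβ : β < α)
    {l : ℕ} (d : Fin l → D) :
    ∃ c : Fin l → D, bfEquiv rel β (k + l) (Fin.append a c) (Fin.append b d) := by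
  rw [bfEquiv, if_neg (zero_le.trans_lt hβ).ne'] at h
  exact (h β hβ).2 l d

end BackAndForth

section Graph

variable {V : Type} {E : V → V → Prop}

theorem atomEquiv.edge_iff {k : ℕ} {a b : Fin k → V} (h : atomEquiv (graphRel E) a b)
    (i j : Fin k) : E (a i) (a j) ↔ E (b i) (b j) := by
  simpa [graphRel] using h.2 0 ![i, j]

theorem ball_mono (E : V → V → Prop) (U : Set V) : Monotone (ball E U) :=
  monotone_nat_of_le_succ fun _ => Set.subset_union_left

theorem ball_finite (hlf : LocallyFiniteGraph E) {U : Set V} (hU : U.Finite) :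
    ∀ n, (ball E U n).Finite
  | 0 => hU
  | n + 1 => by
    have hball := ball_finite hlf hU n
    refine hball.union <| (hball.biUnion fun u _ => hlf u).subset ?_
    rintro v ⟨u, hu, huv⟩
    exact Set.mem_biUnion hu huv

/-- Every path of length at most `n` out of `U` runs through entries of `t`, and `s` follows it
along the same indices. -/
theorem mem_ball_of_mem_ball {ι : Type} {t s : ι → V}
    (hE : ∀ i j, E (t i) (t j) → E (s i) (s j)) {U U' : Set V} (hU : ∀ i, t i ∈ U → s i ∈ U')
    {n : ℕ} (ht : ball E U n ⊆ Set.range t) :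
    ∀ p ≤ n, ∀ i, t i ∈ ball E U p → s i ∈ ball E U' p
  | 0, _, i, hi => hU i hi
  | p + 1, hp, i, .inl hi => .inl (mem_ball_of_mem_ball hE hU ht p (by omega) i hi)
  | p + 1, hp, i, .inr ⟨u, hu, hui⟩ => by
    obtain ⟨j, rfl⟩ := ht (ball_mono E U (by omega) hu)
    exact .inr ⟨s j, mem_ball_of_mem_ball hE hU ht p (by omega) j hu, hui.imp (hE j i) (hE i j)⟩

theorem mem_image_iff_mem_image {ι : Type} {t s : ι → V} (heq : ∀ i j, t i = t j ↔ s i = s j)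
    (I : Set ι) (i : ι) : t i ∈ t '' I ↔ s i ∈ s '' I :=
  ⟨fun ⟨j, hj, h⟩ => ⟨j, hj, (heq j i).1 h⟩, fun ⟨j, hj, h⟩ => ⟨j, hj, (heq j i).2 h⟩⟩

theorem exists_edge_equiv_of_tuples {ι : Type} {t s : ι → V}
    (heq : ∀ i j, t i = t j ↔ s i = s j) (hE : ∀ i j, E (t i) (t j) ↔ E (s i) (s j))
    {A B : Set V} (hA : A ⊆ Set.range t) (hB : B ⊆ Set.range s)
    (hAB : ∀ i, t i ∈ A ↔ s i ∈ B) :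
    ∃ g : A ≃ B, (∀ x y : A, E x y ↔ E (g x) (g y)) ∧
      ∀ (x : A) (i : ι), (x : V) = t i → (g x : V) = s i := by
  choose idxA hidxA using fun x : A => hA x.2
  choose idxB hidxB using fun y : B => hB y.2
  let F : A → B := fun x => ⟨s (idxA x), (hAB _).1 (by rw [hidxA]; exact x.2)⟩
  let G : B → A := fun y => ⟨t (idxB y), (hAB _).2 (by rw [hidxB]; exact y.2)⟩
  have hF : ∀ (x : A) i, (x : V) = t i → (F x : V) = s i :=
    fun x i h => (heq _ _).1 ((hidxA x).trans h)
  have hG : ∀ (y : B) i, (y : V) = s i → (G y : V) = t i :=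
    fun y i h => (heq _ _).2 ((hidxB y).trans h)
  refine ⟨⟨F, G, fun x => ?_, fun y => ?_⟩, fun x y => ?_, hF⟩
  · exact Subtype.ext ((hG (F x) (idxA x) rfl).trans (hidxA x))
  · exact Subtype.ext ((hF (G y) (idxB y) rfl).trans (hidxB y))
  · rw [Equiv.coe_fn_mk, hF x _ (hidxA x).symm, hF y _ (hidxA y).symm, ← hidxA x, ← hidxA y]
    exact hE _ _

end Graph

/-- Enumerate `B_n(ā)` as `c` and `B_n(b̄)` as `e`; two rounds of the back-and-forth game give
`d` and `f` with `ā c f ≡⁰ b̄ d e`. These tuples cover both neighbourhoods, have the same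
atomic type, and hence distance from `ā` resp. `b̄` is transferred between their entries. -/
theorem neighbourhood_bijection_of_equiv_two {V : Type} (E : V → V → Prop)
    (hlf : LocallyFiniteGraph E) {k : ℕ} (a b : Fin k → V)
    (hab : bfEquiv (graphRel E) 2 k a b) (n : ℕ) :
    ∃ g : ↥(ball E (Set.range a) n) ≃ ↥(ball E (Set.range b) n),
      (∀ x y : ↥(ball E (Set.range a) n), E ↑x ↑y ↔ E ↑(g x) ↑(g y)) ∧
      ∀ (x : ↥(ball E (Set.range a) n)) (i : Fin k), (x : V) = a i → (↑(g x) : V) = b i := by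
  obtain ⟨l, c, hc⟩ := (ball_finite hlf (Set.finite_range a) n).fin_embedding
  obtain ⟨m, e, he⟩ := (ball_finite hlf (Set.finite_range b) n).fin_embedding
  obtain ⟨d, hd⟩ := hab.exists_forth one_lt_two c
  obtain ⟨f, hf⟩ := hd.exists_back zero_lt_one e
  set t := Fin.append (Fin.append a c) f
  set s := Fin.append (Fin.append b d) e
  have hatom := bfEquiv_zero_iff.1 hf
  have hta : t ∘ Fin.castAdd m ∘ Fin.castAdd l = a := by ext; simp [t]
  have hsb : s ∘ Fin.castAdd m ∘ Fin.castAdd l = b := by ext; simp [s]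
  have hbase (i) : t i ∈ Set.range a ↔ s i ∈ Set.range b := by
    rw [← hta, ← hsb, Set.range_comp t, Set.range_comp s]
    exact mem_image_iff_mem_image hatom.1 _ i
  have hct : ball E (Set.range a) n ⊆ Set.range t := by
    rw [← hc]; rintro _ ⟨j, rfl⟩; exact ⟨Fin.castAdd m (Fin.natAdd k j), by simp [t]⟩
  have hes : ball E (Set.range b) n ⊆ Set.range s := by
    rw [← he]; rintro _ ⟨j, rfl⟩; exact ⟨Fin.natAdd (k + l) j, by simp [s]⟩
  have hball (i) : t i ∈ ball E (Set.range a) n ↔ s i ∈ ball E (Set.range b) n :=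
    ⟨mem_ball_of_mem_ball (fun i j => (hatom.edge_iff i j).1) (fun i => (hbase i).1) hct
        n le_rfl i,
      mem_ball_of_mem_ball (fun i j => (hatom.edge_iff i j).2) (fun i => (hbase i).2) hes
        n le_rfl i⟩
  obtain ⟨g, hgE, hg⟩ := exists_edge_equiv_of_tuples hatom.1 hatom.edge_iff hct hes hball
  exact ⟨g, hgE, fun x i hx => by
    rw [← congrFun hsb i]; exact hg x _ (hx.trans (congrFun hta i).symm)⟩

end AutoStruct
end

section
/- Let G = (V,E) be a locally finite directed graph and let ā, b̄ be finite tuples from V of equal length such that for every n there is an isomorphism of the induced subgraphs (B_n(ā), E) and (B_n(b̄), E) sending ā to b̄. Then there is an isomorphism between the union of the connected components of G containing the entries of ā and the union of the connected components containing the entries of b̄ which sends ā to b̄. -/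
section DirectedUnion

variable {ι α β : Type*} [Preorder ι] [IsDirectedOrder ι] {s : ι → Set α} {t : ι → Set β}

theorem Monotone.exists_mem_mem_of_mem_iUnion (hs : Monotone s) {x y : α}
    (hx : x ∈ ⋃ i, s i) (hy : y ∈ ⋃ i, s i) : ∃ i, x ∈ s i ∧ y ∈ s i := by
  obtain ⟨i, hi⟩ := Set.mem_iUnion.1 hx
  obtain ⟨j, hj⟩ := Set.mem_iUnion.1 hy
  obtain ⟨k, hik, hjk⟩ := exists_ge_ge i j
  exact ⟨k, hs hik hi, hs hjk hj⟩

theorem Monotone.exists_equiv_iUnion_of_compatible (hs : Monotone s) (e : ∀ i, s i ≃ t i)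
    (he : ∀ ⦃i j⦄ (hij : i ≤ j) (x : s i), (e j (Set.inclusion (hs hij) x) : β) = e i x) :
    ∃ g : ↥(⋃ i, s i) ≃ ↥(⋃ i, t i),
      ∀ i (x : s i), (g (Set.inclusion (Set.subset_iUnion s i) x) : β) = e i x := by
  let f : ↥(⋃ i, s i) → ↥(⋃ i, t i) :=
    Set.iUnionLift s (fun i x => Set.inclusion (Set.subset_iUnion t i) (e i x))
      (fun i j x hxi hxj => by
        obtain ⟨k, hik, hjk⟩ := exists_ge_ge i j
        apply Subtype.ext
        rw [Set.coe_inclusion, Set.coe_inclusion, ← he hik, ← he hjk]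
        rfl)
      _ subset_rfl
  have hf : ∀ i (x : s i), f (Set.inclusion (Set.subset_iUnion s i) x) =
      Set.inclusion (Set.subset_iUnion t i) (e i x) :=
    fun i x => Set.iUnionLift_inclusion x _
  refine ⟨Equiv.ofBijective f ⟨?_, ?_⟩, fun i x => congrArg Subtype.val (hf i x)⟩
  · rintro ⟨x, hx⟩ ⟨y, hy⟩ hxy
    obtain ⟨k, hxk, hyk⟩ := hs.exists_mem_mem_of_mem_iUnion hx hy
    have := congrArg Subtype.val ((hf k ⟨x, hxk⟩).symm.trans (hxy.trans (hf k ⟨y, hyk⟩)))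
    simpa using (e k).injective (Subtype.ext this)
  · rintro ⟨y, hy⟩
    obtain ⟨i, hi⟩ := Set.mem_iUnion.1 hy
    exact ⟨_, (hf i ((e i).symm ⟨y, hi⟩)).trans (by simp)⟩

end DirectedUnion

namespace AutoStruct

variable {V ι : Type} {E : V → V → Prop}

theorem monotone_ball (U : Set V) : Monotone (ball E U) :=
  monotone_nat_of_le_succ fun _ => Set.subset_union_left

theorem LocallyFiniteGraph.finite_ball (hlf : LocallyFiniteGraph E) {U : Set V} (hU : U.Finite)
    (n : ℕ) : (ball E U n).Finite := by
  induction n with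
  | zero => exact hU
  | succ n ih =>
    refine ih.union ((ih.biUnion fun u _ => hlf u).subset ?_)
    rintro v ⟨u, hu, hv⟩
    exact Set.mem_biUnion hu hv

theorem setOf_exists_conn_eq_iUnion_ball (c : ι → V) :
    {v | ∃ i, conn E (c i) v} = ⋃ n, ball E (Set.range c) n := by
  ext v
  simp only [Set.mem_iUnion]
  constructor
  · rintro ⟨i, hc⟩
    induction hc with
    | refl => exact ⟨0, i, rfl⟩
    | tail _ h ih =>
      obtain ⟨n, hn⟩ := ih
      exact ⟨n + 1, Or.inr ⟨_, hn, h⟩⟩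
  · rintro ⟨n, hn⟩
    induction n generalizing v with
    | zero =>
      obtain ⟨i, rfl⟩ := hn
      exact ⟨i, Relation.ReflTransGen.refl⟩
    | succ n ih =>
      rcases hn with hn | ⟨u, hu, he⟩
      · exact ih v hn
      · obtain ⟨i, hi⟩ := ih u hu
        exact ⟨i, hi.tail he⟩

def IsBallIso (E : V → V → Prop) (a b : ι → V) (n : ℕ)
    (g : ball E (Set.range a) n ≃ ball E (Set.range b) n) : Prop :=
  (∀ x y : ball E (Set.range a) n, E x y ↔ E (g x) (g y)) ∧
    ∀ (x : ball E (Set.range a) n) i, (x : V) = a i → (g x : V) = b i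

def BallIso (E : V → V → Prop) (a b : ι → V) (n : ℕ) : Type :=
  {g : ball E (Set.range a) n ≃ ball E (Set.range b) n // IsBallIso E a b n g}

namespace IsBallIso

variable {a b : ι → V} {n : ℕ} {g : ball E (Set.range a) n ≃ ball E (Set.range b) n}

theorem symm (hg : IsBallIso E a b n g) : IsBallIso E b a n g.symm := by
  refine ⟨fun x y => ?_, fun x i hx => ?_⟩
  · simpa using (hg.1 (g.symm x) (g.symm y)).symm
  · have hai : a i ∈ ball E (Set.range a) n := monotone_ball _ n.zero_le ⟨i, rfl⟩
    rw [g.symm_apply_eq.2 (Subtype.ext (hx.trans (hg.2 ⟨a i, hai⟩ i rfl).symm))]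

theorem mem_ball_of_mem (hg : IsBallIso E a b n g) {m : ℕ} (hm : m ≤ n)
    {x : ball E (Set.range a) n} (hx : (x : V) ∈ ball E (Set.range a) m) :
    (g x : V) ∈ ball E (Set.range b) m := by
  induction m generalizing x with
  | zero =>
    obtain ⟨i, hi⟩ := hx
    exact ⟨i, (hg.2 x i hi.symm).symm⟩
  | succ m ih =>
    rcases hx with hx | ⟨u, hu, he⟩
    · exact Or.inl (ih (by omega) hx)
    · let u' : ball E (Set.range a) n := ⟨u, monotone_ball _ (by omega) hu⟩
      exact Or.inr ⟨g u', ih (by omega) hu, he.imp (hg.1 u' x).1 (hg.1 x u').1⟩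

theorem apply_mem_ball_iff (hg : IsBallIso E a b n g) {m : ℕ} (hm : m ≤ n)
    (x : ball E (Set.range a) n) :
    (g x : V) ∈ ball E (Set.range b) m ↔ (x : V) ∈ ball E (Set.range a) m :=
  ⟨fun h => by simpa using hg.symm.mem_ball_of_mem hm h, hg.mem_ball_of_mem hm⟩

end IsBallIso

namespace BallIso

variable {a b : ι → V} {m n : ℕ}

def restrict (g : BallIso E a b n) (hmn : m ≤ n) : BallIso E a b m :=
  ⟨(Equiv.subtypeSubtypeEquivSubtype fun hx => monotone_ball _ hmn hx).symm.trans
      ((g.1.subtypeEquiv fun x => (g.2.apply_mem_ball_iff hmn x).symm).trans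
        (Equiv.subtypeSubtypeEquivSubtype fun hx => monotone_ball _ hmn hx)),
    fun x y => g.2.1 (Set.inclusion (monotone_ball _ hmn) x)
      (Set.inclusion (monotone_ball _ hmn) y),
    fun x i hx => g.2.2 (Set.inclusion (monotone_ball _ hmn) x) i hx⟩

theorem restrict_apply (g : BallIso E a b n) (hmn : m ≤ n) (x : ball E (Set.range a) m) :
    ((g.restrict hmn).1 x : V) = g.1 (Set.inclusion (monotone_ball _ hmn) x) :=
  rfl

end BallIso

theorem LocallyFiniteGraph.exists_forall_restrict_eq [Finite ι] (hlf : LocallyFiniteGraph E)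
    {a b : ι → V} (h : ∀ n, Nonempty (BallIso E a b n)) :
    ∃ F : ∀ n, BallIso E a b n, ∀ ⦃m n⦄ (hmn : m ≤ n), (F n).restrict hmn = F m := by
  have hfin : ∀ n, Finite (BallIso E a b n) := fun n =>
    have := (hlf.finite_ball (Set.finite_range a) n).to_subtype
    have := (hlf.finite_ball (Set.finite_range b) n).to_subtype
    Subtype.finite
  exact exists_seq_forall_proj_of_forall_finite (α := BallIso E a b) (fun hmn g => g.restrict hmn)
    (fun _ _ => rfl) (fun _ _ _ _ _ _ => rfl) fun _ _ => Set.toFinite _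

theorem exists_iso_iUnion_ball {a b : ι → V} (F : ∀ n, BallIso E a b n)
    (hF : ∀ ⦃m n⦄ (hmn : m ≤ n), (F n).restrict hmn = F m) :
    ∃ g : ↥(⋃ n, ball E (Set.range a) n) ≃ ↥(⋃ n, ball E (Set.range b) n),
      (∀ x y : ↥(⋃ n, ball E (Set.range a) n), E ↑x ↑y ↔ E ↑(g x) ↑(g y)) ∧
      ∀ (x : ↥(⋃ n, ball E (Set.range a) n)) (i : ι), (x : V) = a i → (↑(g x) : V) = b i := by
  obtain ⟨g, hg⟩ := (monotone_ball _).exists_equiv_iUnion_of_compatible (fun n => (F n).1)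
    fun m n hmn x => by rw [← hF hmn, BallIso.restrict_apply]
  refine ⟨g, fun x y => ?_, fun x i hx => ?_⟩
  · obtain ⟨n, hxn, hyn⟩ := (monotone_ball _).exists_mem_mem_of_mem_iUnion x.2 y.2
    calc E x y ↔ E ((F n).1 ⟨x, hxn⟩) ((F n).1 ⟨y, hyn⟩) := (F n).2.1 ⟨x, hxn⟩ ⟨y, hyn⟩
      _ ↔ E (g x) (g y) := by rw [← hg n ⟨x, hxn⟩, ← hg n ⟨y, hyn⟩]
  · have hx0 : (x : V) ∈ ball E (Set.range a) 0 := ⟨i, hx.symm⟩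
    rw [← (F 0).2.2 ⟨x, hx0⟩ i hx, ← hg 0]

/-- **Lemma 11.** In a locally finite directed graph, if for every `n` the `n`-neighbourhoods
of `ā` and `b̄` are isomorphic via a map sending `ā` to `b̄`, then the unions of the connected
components containing `ā` and `b̄` are isomorphic via a map sending `ā` to `b̄`. -/
theorem component_iso_of_neighbourhood_isos {V : Type} (E : V → V → Prop)
    (hlf : LocallyFiniteGraph E) {k : ℕ} (a b : Fin k → V)
    (h : ∀ n : ℕ, ∃ g : ↥(ball E (Set.range a) n) ≃ ↥(ball E (Set.range b) n),
      (∀ x y : ↥(ball E (Set.range a) n), E ↑x ↑y ↔ E ↑(g x) ↑(g y)) ∧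
      ∀ (x : ↥(ball E (Set.range a) n)) (i : Fin k), (x : V) = a i → (↑(g x) : V) = b i) :
    ∃ g : ↥{v | ∃ i, conn E (a i) v} ≃ ↥{v | ∃ i, conn E (b i) v},
      (∀ x y : ↥{v | ∃ i, conn E (a i) v}, E ↑x ↑y ↔ E ↑(g x) ↑(g y)) ∧
      ∀ (x : ↥{v | ∃ i, conn E (a i) v}) (i : Fin k),
        (x : V) = a i → (↑(g x) : V) = b i := by
  obtain ⟨F, hF⟩ := hlf.exists_forall_restrict_eq fun n => let ⟨g, hg⟩ := h n; ⟨g, hg⟩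
  rw [setOf_exists_conn_eq_iUnion_ball, setOf_exists_conn_eq_iUnion_ball]
  exact exists_iso_iUnion_ball F hF

end AutoStruct
end
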